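/- arXiv:1307.3184 — 7 statements merged into one kernel-verified Lean document; each statement's English description precedes it below -/
import Mathlib

section
/- Let X and Y be countable types, let p : X → [0,∞] satisfy ∑' x, p x ≤ 1, let m : Y → [0,∞] satisfy ∑' y, m y ≤ 1, let B : X → Y be any function, and define the pushforward Bp : Y → [0,∞] by Bp y = ∑' over {x : B x = y} of p x. Then ∑' x, (m (B x) * p x) / (Bp (B x)) ≤ 1. (Equivalently: the function t(x) = m(B x)·p(x)/(m(x)·Bp(B x)) satisfies ∑' x, m x * t x ≤ 1, i.e. t is an m-test.) -/
open scoped ENNReal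

/-- Randomness conservation test construction (Theorem 1 of the paper):
given discrete semi-measures `p` on `X` and `m` on `Y`, any function `B : X → Y`,
and the pushforward `Bp y = ∑' {x // B x = y}, p x`, the sum
`∑' x, m (B x) * p x / Bp (B x)` is at most `1`. -/
theorem stmt0 {X Y : Type*} [Countable X] [Countable Y]
    (p : X → ℝ≥0∞) (hp : ∑' x, p x ≤ 1)
    (m : Y → ℝ≥0∞) (hm : ∑' y, m y ≤ 1)
    (B : X → Y)
    (Bp : Y → ℝ≥0∞) (hBp : ∀ y, Bp y = ∑' x : {x : X // B x = y}, p x.1) :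
    ∑' x, m (B x) * p x / Bp (B x) ≤ 1 := by
  set f : X → ℝ≥0∞ := fun x => m (B x) * p x / Bp (B x) with hf
  have h1 : ∑' x, f x = ∑' (y : Y) (x : {x : X // B x = y}), f x.1 := by
    rw [← (Equiv.sigmaFiberEquiv B).tsum_eq f, ENNReal.tsum_sigma']; rfl
  rw [h1]
  calc ∑' (y : Y) (x : {x : X // B x = y}), f x.1
      = ∑' (y : Y), m y * Bp y / Bp y := by
        refine tsum_congr fun y => ?_
        have : ∀ x : {x : X // B x = y}, f x.1 = m y / Bp y * p x.1 := by
          rintro ⟨x, rfl⟩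
          simp [hf, div_eq_mul_inv]
          ring
        rw [tsum_congr this, ENNReal.tsum_mul_left, ← hBp y, div_eq_mul_inv,
          div_eq_mul_inv]
        ring
    _ ≤ ∑' y, m y := by
        refine ENNReal.tsum_le_tsum fun y => ?_
        rw [mul_div_assoc]
        exact mul_le_of_le_one_right' ENNReal.div_self_le_one
    _ ≤ 1 := hm
end

section
/- Let X and Y be countable types, let f : X → Option Y (a partial function, with f x = none denoting 'undefined'), let m : X → [0,∞] satisfy ∑' x, m x ≤ 1, let m' : Y → [0,∞] satisfy ∑' y, m' y ≤ 1, and let m₁ : Y → [0,∞] satisfy, for every y, ∑' over {x : f x = some y} of m x ≤ m₁ y. Define s : X → [0,∞] by s x = m'(y) * m x / m₁ y when f x = some y, and s x = 0 when f x = none. Then ∑' x, s x ≤ 1, i.e. s is a semi-measure. -/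
open scoped ENNReal

/-- The semi-measure construction in the proof of conservation of information with the
halting sequence over partial recursive functions (Theorem 4 of the paper). -/
theorem stmt1 {X Y : Type*} [Countable X] [Countable Y]
    (f : X → Option Y)
    (m : X → ℝ≥0∞) (hm : ∑' x, m x ≤ 1)
    (m' : Y → ℝ≥0∞) (hm' : ∑' y, m' y ≤ 1)
    (m₁ : Y → ℝ≥0∞)
    (hm₁ : ∀ y, ∑' x : {x : X // f x = some y}, m x.1 ≤ m₁ y)
    (s : X → ℝ≥0∞)
    (hs : ∀ x, s x = (f x).elim 0 (fun y => m' y * m x / m₁ y)) :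
    ∑' x, s x ≤ 1 := by
  set g : Option Y → ℝ≥0∞ := fun o => o.elim 0 m' with hg
  have key : ∑' x, s x ≤ ∑' o : Option Y, g o := by
    calc ∑' x, s x = ∑' p : Σ o : Option Y, {x : X // f x = o}, s p.2.1 :=
          ((Equiv.sigmaFiberEquiv f).tsum_eq s).symm
      _ = ∑' (o : Option Y), ∑' x : {x : X // f x = o}, s x.1 :=
          ENNReal.tsum_sigma' (fun p : (Σ o : Option Y, {x : X // f x = o}) => s p.2.1)
      _ ≤ ∑' o : Option Y, g o := by
          apply ENNReal.tsum_le_tsum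
          rintro (_ | y)
          · have h0 : ∀ x : {x : X // f x = none}, s x.1 = 0 := fun x => by
              rw [hs, x.2]; rfl
            simp [h0, hg]
          · have hse : ∀ x : {x : X // f x = some y}, s x.1 = m' y * m x.1 / m₁ y :=
              fun x => by rw [hs, x.2]; rfl
            have : g (some y) = m' y := rfl
            rw [this]
            calc ∑' x : {x : X // f x = some y}, s x.1
                = ∑' x : {x : X // f x = some y}, m' y * m x.1 / m₁ y := tsum_congr hse
              _ = m' y * (∑' x : {x : X // f x = some y}, m x.1) / m₁ y := by
                  simp_rw [div_eq_mul_inv, ENNReal.tsum_mul_right, ENNReal.tsum_mul_left]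
              _ ≤ m' y * m₁ y / m₁ y := by gcongr; exact hm₁ y
              _ ≤ m' y := by
                  rw [mul_div_assoc]
                  calc m' y * (m₁ y / m₁ y) ≤ m' y * 1 := by
                        gcongr; exact ENNReal.div_self_le_one
                    _ = m' y := mul_one _
  refine key.trans ?_
  have hsupp : Function.support g ⊆ Set.range (some : Y → Option Y) := by
    rintro (_ | y) h
    · simp [hg] at h
    · exact ⟨y, rfl⟩
  have heq : ∑' o : Option Y, g o = ∑' y, m' y := by
    rw [← tsum_subtype_eq_of_support_subset hsupp]
    exact ((Equiv.ofInjective some (Option.some_injective Y)).tsum_eq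
      (fun o : Set.range (some : Y → Option Y) => g o.1)).symm
  rw [heq]; exact hm'
end

section
/- Let X, Y, Z be countable types, let M : Z × Y → [0,∞] satisfy ∑' (z,y), M (z,y) ≤ 1, let m : X → [0,∞] satisfy ∑' x, m x ≤ 1, let B : X → Z be any function, and let m₁ : Z → [0,∞] and t : Z → [0,∞] be such that (i) for every z, ∑' over {x : B x = z} of m x ≤ m₁ z * t z, and (ii) ∑' (z,y), M (z,y) * t z ≤ 1. Then ∑' (x,y), M (B x, y) * m x / m₁ (B x) ≤ 1. -/
open scoped ENNReal

/-- The summation at the heart of conservation of mutual information over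
limit computable functions (Theorem 3 of the paper). -/
theorem stmt2 {X Y Z : Type*} [Countable X] [Countable Y] [Countable Z]
    (M : Z × Y → ℝ≥0∞) (hM : ∑' zy : Z × Y, M zy ≤ 1)
    (m : X → ℝ≥0∞) (hm : ∑' x, m x ≤ 1)
    (B : X → Z)
    (m₁ t : Z → ℝ≥0∞)
    (h1 : ∀ z, ∑' x : {x : X // B x = z}, m x.1 ≤ m₁ z * t z)
    (h2 : ∑' zy : Z × Y, M zy * t zy.1 ≤ 1) :
    ∑' xy : X × Y, M (B xy.1, xy.2) * m xy.1 / m₁ (B xy.1) ≤ 1 := by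
  -- key pointwise fact: (∑ over fiber of m) / m₁ z ≤ t z
  have key : ∀ z, (∑' x : {x : X // B x = z}, m x.1) / m₁ z ≤ t z := by
    intro z
    rcases eq_or_ne (m₁ z) 0 with h0 | h0
    · have : ∑' x : {x : X // B x = z}, m x.1 = 0 := le_antisymm (by simpa [h0] using h1 z) bot_le
      simp [this]
    rcases eq_or_ne (m₁ z) ⊤ with hT | hT
    · simp [hT, ENNReal.div_top]
    · rw [ENNReal.div_le_iff h0 hT]
      simpa [mul_comm] using h1 z
  have step1 : ∑' xy : X × Y, M (B xy.1, xy.2) * m xy.1 / m₁ (B xy.1)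
      = ∑' x, (m x / m₁ (B x)) * ∑' y, M (B x, y) := by
    rw [ENNReal.tsum_prod']
    congr 1; ext x
    calc ∑' y, M (B x, y) * m x / m₁ (B x)
        = ∑' y, (m x / m₁ (B x)) * M (B x, y) := by
          congr 1; ext y; rw [mul_div_assoc, mul_comm]
      _ = (m x / m₁ (B x)) * ∑' y, M (B x, y) := ENNReal.tsum_mul_left
  rw [step1]
  have step2 : ∑' x, (m x / m₁ (B x)) * ∑' y, M (B x, y)
      = ∑' z, ∑' x : {x : X // B x = z}, (m x.1 / m₁ z) * ∑' y, M (z, y) := by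
    rw [← (Equiv.sigmaFiberEquiv B).tsum_eq
      (fun x => (m x / m₁ (B x)) * ∑' y, M (B x, y)), ENNReal.tsum_sigma']
    congr 1; ext z; congr 1; ext x
    simp [Equiv.sigmaFiberEquiv, x.2]
  rw [step2]
  calc ∑' z, ∑' x : {x : X // B x = z}, (m x.1 / m₁ z) * ∑' y, M (z, y)
      = ∑' z, ((∑' x : {x : X // B x = z}, m x.1) / m₁ z) * ∑' y, M (z, y) := by
        congr 1; ext z
        simp [div_eq_mul_inv, ENNReal.tsum_mul_right]
    _ ≤ ∑' z, t z * ∑' y, M (z, y) := ENNReal.tsum_le_tsum fun z =>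
        mul_le_mul_left (key z) _
    _ = ∑' zy : Z × Y, M zy * t zy.1 := by
        rw [ENNReal.tsum_prod']
        congr 1; ext z
        rw [← ENNReal.tsum_mul_left]
        exact tsum_congr fun y => mul_comm _ _
    _ ≤ 1 := h2
end

section
/- Let M be a function from binary strings to [0,∞] with M(x·0) + M(x·1) ≤ M(x) for every string x. Let r be a binary string and let S be an antichain of binary strings each of which has r as a prefix. Then ∑' over x ∈ S of M x ≤ M r. -/
open scoped ENNReal

private lemma kraft_fin (M : List Bool → ℝ≥0∞)
    (hM : ∀ x, M (x ++ [false]) + M (x ++ [true]) ≤ M x) :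
    ∀ (k : ℕ) (r : List Bool) (T : Finset (List Bool)),
      (∀ x ∈ T, r <+: x) →
      (∀ a ∈ T, ∀ b ∈ T, a <+: b → a = b) →
      (∀ x ∈ T, x.length ≤ r.length + k) →
      ∑ x ∈ T, M x ≤ M r := by
  intro k
  induction k with
  | zero =>
    intro r T hpre _ hlen
    have hsub : T ⊆ {r} := by
      intro x hx
      have h1 := hpre x hx
      have h2 := hlen x hx
      have hle := h1.length_le
      have : r = x := List.IsPrefix.eq_of_length h1 (by omega)
      simp [← this]
    calc ∑ x ∈ T, M x ≤ ∑ x ∈ ({r} : Finset (List Bool)), M x :=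
          Finset.sum_le_sum_of_subset hsub
      _ = M r := by simp
  | succ k ih =>
    intro r T hpre hanti hlen
    by_cases hr : r ∈ T
    · have hsub : T ⊆ {r} := by
        intro x hx
        have := hanti r hr x hx (hpre x hx)
        simp [← this]
      calc ∑ x ∈ T, M x ≤ ∑ x ∈ ({r} : Finset (List Bool)), M x :=
            Finset.sum_le_sum_of_subset hsub
        _ = M r := by simp
    · set T0 := T.filter (fun x => (r ++ [false]) <+: x) with hT0
      set T1 := T.filter (fun x => (r ++ [true]) <+: x) with hT1
      have hcover : ∀ x ∈ T, (r ++ [false]) <+: x ∨ (r ++ [true]) <+: x := by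
        intro x hx
        obtain ⟨t, ht⟩ := hpre x hx
        have htne : t ≠ [] := by
          rintro rfl
          simp only [List.append_nil] at ht
          exact hr (ht ▸ hx)
        obtain ⟨b, t', rfl⟩ := List.exists_cons_of_ne_nil htne
        cases b
        · left; exact ⟨t', by simpa using ht⟩
        · right; exact ⟨t', by simpa using ht⟩
      have hdisj : Disjoint T0 T1 := by
        rw [Finset.disjoint_left]
        intro x hx0 hx1
        rw [hT0, Finset.mem_filter] at hx0
        rw [hT1, Finset.mem_filter] at hx1
        have h0 := hx0.2
        have h1 := hx1.2
        have hp := List.prefix_of_prefix_length_le h0 h1 (by simp)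
        have heq : (r ++ [false] : List Bool) = r ++ [true] :=
          List.IsPrefix.eq_of_length hp (by simp)
        simpa using heq
      have hunion : T = T0 ∪ T1 := by
        apply Finset.ext
        intro x
        simp only [hT0, hT1, Finset.mem_union, Finset.mem_filter]
        constructor
        · intro hx
          rcases hcover x hx with h | h
          · exact Or.inl ⟨hx, h⟩
          · exact Or.inr ⟨hx, h⟩
        · rintro (⟨hx, _⟩ | ⟨hx, _⟩) <;> exact hx
      have key : ∀ b : Bool, ∑ x ∈ T.filter (fun x => (r ++ [b]) <+: x), M x ≤ M (r ++ [b]) := by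
        intro b
        apply ih (r ++ [b])
        · intro x hx; exact (Finset.mem_filter.mp hx).2
        · intro a ha b' hb'; exact hanti a (Finset.mem_filter.mp ha).1 b' (Finset.mem_filter.mp hb').1
        · intro x hx
          have := hlen x (Finset.mem_filter.mp hx).1
          simp only [List.length_append, List.length_cons, List.length_nil]
          omega
      calc ∑ x ∈ T, M x = ∑ x ∈ T0, M x + ∑ x ∈ T1, M x := by
            rw [hunion, Finset.sum_union hdisj]
        _ ≤ M (r ++ [false]) + M (r ++ [true]) := add_le_add (key false) (key true)
        _ ≤ M r := hM r

/-- Kraft-type inequality for superadditive functions on the binary tree: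
the mass of an antichain above `r` is at most the mass of `r`. -/
theorem stmt3 (M : List Bool → ℝ≥0∞)
    (hM : ∀ x, M (x ++ [false]) + M (x ++ [true]) ≤ M x)
    (r : List Bool) (S : Set (List Bool))
    (hanti : ∀ a ∈ S, ∀ b ∈ S, a <+: b → a = b)
    (hpre : ∀ x ∈ S, r <+: x) :
    ∑' x : S, M x.1 ≤ M r := by
  apply tsum_le_of_sum_le' zero_le ?_
  intro s
  have hinj : Set.InjOn (fun x : S => x.1) s := fun a _ b _ h => Subtype.ext h
  rw [← Finset.sum_image hinj]
  set T := s.image (fun x : S => x.1) with hT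
  have hTS : ∀ x ∈ T, x ∈ S := by
    intro x hx
    simp only [hT, Finset.mem_image] at hx
    obtain ⟨a, _, rfl⟩ := hx
    exact a.2
  apply kraft_fin M hM (T.sup List.length) r T
  · intro x hx; exact hpre x (hTS x hx)
  · intro a ha b hb h; exact hanti a (hTS a ha) b (hTS b hb) h
  · intro x hx
    have := Finset.le_sup (f := List.length) hx
    omega
end

section
/- Let M be a function from binary strings to [0,∞] with M(x·0) + M(x·1) ≤ M(x) for every string x. Let S and T be antichains of binary strings such that every element of T has some element of S as a prefix. Then ∑' over t ∈ T of M t ≤ ∑' over s ∈ S of M s. -/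
open scoped ENNReal

lemma keyFin (M : List Bool → ℝ≥0∞)
    (hM : ∀ x, M (x ++ [false]) + M (x ++ [true]) ≤ M x) :
    ∀ (n : ℕ) (x : List Bool) (F : Finset (List Bool)),
      (∀ a ∈ F, x <+: a) → (∀ a ∈ F, a.length ≤ x.length + n) →
      (∀ a ∈ F, ∀ b ∈ F, a <+: b → a = b) →
      ∑ a ∈ F, M a ≤ M x := by
  intro n
  induction n with
  | zero =>
    intro x F hext hlen _
    have hsub : F ⊆ {x} := by
      intro a ha
      have h1 := hext a ha
      have h2 := hlen a ha
      have hxa : x = a := h1.eq_of_length (le_antisymm h1.length_le (by simpa using h2))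
      simp [← hxa]
    calc ∑ a ∈ F, M a ≤ ∑ a ∈ {x}, M a :=
          Finset.sum_le_sum_of_subset hsub
      _ = M x := Finset.sum_singleton _ _
  | succ n ih =>
    intro x F hext hlen hanti
    by_cases hx : x ∈ F
    · have hFx : F = {x} := by
        apply Finset.eq_singleton_iff_unique_mem.2
        exact ⟨hx, fun a ha => (hanti x hx a ha (hext a ha)).symm⟩
      simp [hFx]
    · have hproper : ∀ a ∈ F, ∃ b : Bool, (x ++ [b]) <+: a := by
        intro a ha
        obtain ⟨r, hr⟩ := hext a ha
        cases r with
        | nil =>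
          have hxa : x = a := by simpa using hr
          exact absurd ha (hxa ▸ hx)
        | cons b r' =>
          exact ⟨b, r', by simpa using hr⟩
      set F0 := F.filter (fun a => (x ++ [false]) <+: a) with hF0
      set F1 := F.filter (fun a => ¬ (x ++ [false]) <+: a) with hF1
      have h0 : ∑ a ∈ F0, M a ≤ M (x ++ [false]) := by
        apply ih (x ++ [false]) F0
        · intro a ha; exact (Finset.mem_filter.1 ha).2
        · intro a ha
          have := hlen a (Finset.mem_filter.1 ha).1
          simp only [List.length_append, List.length_singleton]
          omega
        · intro a ha b hb hab
          exact hanti a (Finset.mem_filter.1 ha).1 b (Finset.mem_filter.1 hb).1 hab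
      have h1 : ∑ a ∈ F1, M a ≤ M (x ++ [true]) := by
        apply ih (x ++ [true]) F1
        · intro a ha
          obtain ⟨haF, hnot⟩ := Finset.mem_filter.1 ha
          obtain ⟨b, hb⟩ := hproper a haF
          cases b with
          | false => exact absurd hb hnot
          | true => exact hb
        · intro a ha
          have := hlen a (Finset.mem_filter.1 ha).1
          simp only [List.length_append, List.length_singleton]
          omega
        · intro a ha b hb hab
          exact hanti a (Finset.mem_filter.1 ha).1 b (Finset.mem_filter.1 hb).1 hab
      calc ∑ a ∈ F, M a = ∑ a ∈ F0, M a + ∑ a ∈ F1, M a :=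
            (Finset.sum_filter_add_sum_filter_not F _ M).symm
        _ ≤ M (x ++ [false]) + M (x ++ [true]) := add_le_add h0 h1
        _ ≤ M x := hM x

lemma keyInf (M : List Bool → ℝ≥0∞)
    (hM : ∀ x, M (x ++ [false]) + M (x ++ [true]) ≤ M x)
    {ι : Type*} (g : ι → List Bool) (x : List Bool)
    (hinj : Function.Injective g)
    (hext : ∀ i, x <+: g i)
    (hanti : ∀ i j, g i <+: g j → g i = g j) :
    ∑' i, M (g i) ≤ M x := by
  rw [ENNReal.tsum_eq_iSup_sum]
  apply iSup_le
  intro F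
  have himg : ∑ i ∈ F, M (g i) = ∑ a ∈ F.image g, M a :=
    (Finset.sum_image (fun i _ j _ h => hinj h)).symm
  rw [himg]
  apply keyFin M hM ((F.image g).sup List.length) x
  · intro a ha
    obtain ⟨i, _, rfl⟩ := Finset.mem_image.1 ha
    exact hext i
  · intro a ha
    have := Finset.le_sup (f := List.length) ha
    omega
  · intro a ha b hb hab
    obtain ⟨i, _, rfl⟩ := Finset.mem_image.1 ha
    obtain ⟨j, _, rfl⟩ := Finset.mem_image.1 hb
    exact hanti i j hab

/-- Kraft-type comparison inequality: if every element of the antichain `T`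
extends some element of the antichain `S`, then the mass of `T` is at most
the mass of `S`. -/
theorem stmt4 (M : List Bool → ℝ≥0∞)
    (hM : ∀ x, M (x ++ [false]) + M (x ++ [true]) ≤ M x)
    (S T : Set (List Bool))
    (hantiS : ∀ a ∈ S, ∀ b ∈ S, a <+: b → a = b)
    (hantiT : ∀ a ∈ T, ∀ b ∈ T, a <+: b → a = b)
    (hT : ∀ t ∈ T, ∃ s ∈ S, s <+: t) :
    ∑' t : T, M t.1 ≤ ∑' s : S, M s.1 := by
  have h : ∀ t : ↥T, ∃ s, s ∈ S ∧ s <+: t.1 := by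
    intro t
    obtain ⟨s, hs, hp⟩ := hT t.1 t.2
    exact ⟨s, hs, hp⟩
  choose f hfS hfpre using h
  set f' : ↥T → ↥S := fun t => ⟨f t, hfS t⟩ with hf'
  have heq : ∑' t : T, M t.1
      = ∑' p : (Σ s : ↥S, {t : ↥T // f' t = s}), M p.2.1.1 :=
    ((Equiv.sigmaFiberEquiv f').tsum_eq (fun t => M t.1)).symm
  rw [heq, ENNReal.tsum_sigma']
  apply ENNReal.tsum_le_tsum
  intro s
  apply keyInf M hM (fun p : {t : ↥T // f' t = s} => p.1.1) s.1
  · intro p q hpq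
    exact Subtype.ext (Subtype.ext hpq)
  · intro p
    have := hfpre p.1
    have hps : f p.1 = s.1 := congrArg Subtype.val p.2
    rwa [hps] at this
  · intro p q hpq
    exact hantiT _ p.1.2 _ q.1.2 hpq
end

section
/- Let ν be a monotone function from binary strings to binary strings (x ⊑ y implies ν(x) ⊑ ν(y)), and for a binary string x let ν⁻¹(x) = { y : x ⊑ ν(y), and either y = ε or ν(y⁻) is a proper prefix of x }. Then for every binary string x, the sets ν⁻¹(x·0) and ν⁻¹(x·1) are disjoint, and their union is an antichain under the prefix order. -/
/-- The preimage set of a string `x` under a monotone machine `ν`: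
the minimal inputs on which the output first reaches or passes `x`. -/
def preimg (ν : List Bool → List Bool) (x : List Bool) : Set (List Bool) :=
  {y | x <+: ν y ∧ (y = [] ∨ (ν y.dropLast <+: x ∧ ν y.dropLast ≠ x))}

private lemma prefix_dropLast_of_proper {a b : List Bool} (h : a <+: b) (hne : a ≠ b) :
    a <+: b.dropLast := by
  have hlt : a.length < b.length := lt_of_le_of_ne h.length_le
    (fun he => hne (List.IsPrefix.eq_of_length h he))
  have hdl : b.dropLast <+: b := List.dropLast_prefix b
  exact List.prefix_of_prefix_length_le h hdl
    (by simpa [List.length_dropLast] using Nat.le_sub_one_of_lt hlt)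

private lemma mem_preimg_aux {ν : List Bool → List Bool} {x : List Bool} {c : Bool} {b : List Bool}
    (hb : b ∈ preimg ν (x ++ [c])) (hbne : b ≠ []) : ν b.dropLast <+: x := by
  rcases hb.2 with h | ⟨h1, h2⟩
  · exact absurd h hbne
  · have hlen : (ν b.dropLast).length ≤ x.length := by
      have := h1.length_le
      simp only [List.length_append, List.length_singleton] at this
      rcases Nat.lt_or_ge (ν b.dropLast).length (x.length + 1) with h | h
      · omega
      · exact absurd (List.IsPrefix.eq_of_length h1 (by simp; omega)) h2
    exact List.prefix_of_prefix_length_le h1 (List.prefix_append x [c]) hlen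

/-- For a monotone `ν`, `ν⁻¹(x·0)` and `ν⁻¹(x·1)` are disjoint, and their union
is an antichain under the prefix order. -/
theorem stmt7 (ν : List Bool → List Bool)
    (hmono : ∀ x y : List Bool, x <+: y → ν x <+: ν y)
    (x : List Bool) :
    Disjoint (preimg ν (x ++ [false])) (preimg ν (x ++ [true])) ∧
      (∀ a ∈ preimg ν (x ++ [false]) ∪ preimg ν (x ++ [true]),
        ∀ b ∈ preimg ν (x ++ [false]) ∪ preimg ν (x ++ [true]),
          a <+: b → a = b) := by
  constructor
  · rw [Set.disjoint_left]
    rintro y ⟨h0, _⟩ ⟨h1, _⟩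
    have := List.prefix_of_prefix_length_le h0 h1 (by simp)
    have heq : x ++ [false] = x ++ [true] :=
      List.IsPrefix.eq_of_length this (by simp)
    simpa using heq
  · intro a ha b hb hab
    by_contra hne
    -- a is a proper prefix of b
    have hbne : b ≠ [] := by
      rintro rfl
      exact hne (List.prefix_nil.mp hab)
    have hadl : a <+: b.dropLast := prefix_dropLast_of_proper hab hne
    have hxa : ∃ c : Bool, (x ++ [c]) <+: ν a := by
      rcases ha with h | h
      · exact ⟨false, h.1⟩
      · exact ⟨true, h.1⟩
    obtain ⟨c, hxc⟩ := hxa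
    have hbx : ν b.dropLast <+: x := by
      rcases hb with h | h
      · exact mem_preimg_aux h hbne
      · exact mem_preimg_aux h hbne
    have hmono' : ν a <+: ν b.dropLast := hmono _ _ hadl
    have := (hxc.trans hmono').trans hbx |>.length_le
    simp at this
end

section
/- Let ν be a monotone function from binary strings to binary strings (x ⊑ y implies ν(x) ⊑ ν(y)), let P be a function from binary strings to [0,∞] with P(x·0) + P(x·1) ≤ P(x) for all x, and define the pushforward BP(x) = ∑' over z ∈ ν⁻¹(x) of P(z), where ν⁻¹(x) = { y : x ⊑ ν(y), and either y = ε or ν(y⁻) is a proper prefix of x }. If x is a binary string and S is an antichain of binary strings such that x ⊑ ν(w) for every w ∈ S, then ∑' over w ∈ S of P(w) ≤ BP(x). -/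
open scoped ENNReal

private lemma exists_cons_bit {z w : List Bool} (h : z <+: w) (hne : z ≠ w) :
    ∃ b, z ++ [b] <+: w := by
  obtain ⟨t, rfl⟩ := h
  match t with
  | [] => exact absurd (by simp) hne
  | b :: t' => exact ⟨b, t', by simp⟩

/-- Kraft-type bound for finite antichains of extensions of `z`. -/
private lemma kraft_finset (P : List Bool → ℝ≥0∞)
    (hP : ∀ x, P (x ++ [false]) + P (x ++ [true]) ≤ P x) :
    ∀ (n : ℕ) (z : List Bool) (T : Finset (List Bool)),
      (∀ w ∈ T, z <+: w) → (∀ w ∈ T, w.length ≤ z.length + n) →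
      (∀ a ∈ T, ∀ b ∈ T, a <+: b → a = b) →
      ∑ w ∈ T, P w ≤ P z := by
  intro n
  induction n with
  | zero =>
    intro z T hpre hlen _
    have hsub : T ⊆ {z} := by
      intro w hw
      have := (hpre w hw).eq_of_length
        (le_antisymm (hpre w hw).length_le (hlen w hw))
      simp [← this]
    calc ∑ w ∈ T, P w ≤ ∑ w ∈ ({z} : Finset (List Bool)), P w :=
          Finset.sum_le_sum_of_subset hsub
      _ = P z := by simp
  | succ n ih =>
    intro z T hpre hlen hA
    by_cases hz : z ∈ T
    · have hsub : T ⊆ {z} := by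
        intro w hw
        have := hA z hz w hw (hpre w hw)
        simp [← this]
      calc ∑ w ∈ T, P w ≤ ∑ w ∈ ({z} : Finset (List Bool)), P w :=
            Finset.sum_le_sum_of_subset hsub
        _ = P z := by simp
    · classical
      have hstep : ∀ w ∈ T, ∃ b, z ++ [b] <+: w := by
        intro w hw
        exact exists_cons_bit (hpre w hw) (fun h => hz (h ▸ hw))
      set T0 := T.filter (fun w => z ++ [false] <+: w) with hT0
      set T1 := T.filter (fun w => ¬ (z ++ [false] <+: w)) with hT1
      have h0 : ∑ w ∈ T0, P w ≤ P (z ++ [false]) := by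
        refine ih (z ++ [false]) T0 ?_ ?_ ?_
        · intro w hw; exact (Finset.mem_filter.1 hw).2
        · intro w hw
          have := hlen w (Finset.mem_filter.1 hw).1
          simpa [Nat.add_assoc, Nat.add_comm 1 n] using this
        · intro a ha b hb hab
          exact hA a (Finset.mem_filter.1 ha).1 b (Finset.mem_filter.1 hb).1 hab
      have h1 : ∑ w ∈ T1, P w ≤ P (z ++ [true]) := by
        refine ih (z ++ [true]) T1 ?_ ?_ ?_
        · intro w hw
          obtain ⟨hwT, hnot⟩ := Finset.mem_filter.1 hw
          obtain ⟨b, hb⟩ := hstep w hwT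
          cases b with
          | false => exact absurd hb hnot
          | true => exact hb
        · intro w hw
          have := hlen w (Finset.mem_filter.1 hw).1
          simpa [Nat.add_assoc, Nat.add_comm 1 n] using this
        · intro a ha b hb hab
          exact hA a (Finset.mem_filter.1 ha).1 b (Finset.mem_filter.1 hb).1 hab
      calc ∑ w ∈ T, P w = ∑ w ∈ T0, P w + ∑ w ∈ T1, P w :=
            (Finset.sum_filter_add_sum_filter_not T _ P).symm
        _ ≤ P (z ++ [false]) + P (z ++ [true]) := add_le_add h0 h1
        _ ≤ P z := hP z

/-- Kraft-type bound, tsum version over an arbitrary index. -/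
private lemma kraft_tsum (P : List Bool → ℝ≥0∞)
    (hP : ∀ x, P (x ++ [false]) + P (x ++ [true]) ≤ P x)
    (z : List Bool) {ι : Type} (g : ι → List Bool)
    (hinj : Function.Injective g) (hpre : ∀ i, z <+: g i)
    (hA : ∀ i j, g i <+: g j → g i = g j) :
    ∑' i, P (g i) ≤ P z := by
  rw [ENNReal.tsum_eq_iSup_sum]
  refine iSup_le fun s => ?_
  classical
  have : ∑ i ∈ s, P (g i) = ∑ w ∈ s.image g, P w :=
    (Finset.sum_image (fun a _ b _ h => hinj h)).symm
  rw [this]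
  refine kraft_finset P hP ((s.image g).sup List.length) z (s.image g) ?_ ?_ ?_
  · intro w hw
    obtain ⟨i, _, rfl⟩ := Finset.mem_image.1 hw
    exact hpre i
  · intro w hw
    exact le_trans (Finset.le_sup hw) (Nat.le_add_left _ _)
  · intro a ha b hb hab
    obtain ⟨i, _, rfl⟩ := Finset.mem_image.1 ha
    obtain ⟨j, _, rfl⟩ := Finset.mem_image.1 hb
    exact hA i j hab

/-- Every input mapping above `x` has a prefix in `preimg ν x`. -/
private lemma exists_preimg_prefix (ν : List Bool → List Bool)
    (hmono : ∀ x y : List Bool, x <+: y → ν x <+: ν y)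
    (x w : List Bool) (hw : x <+: ν w) :
    ∃ y, y ∈ preimg ν x ∧ y <+: w := by
  have hex : ∃ k, x <+: ν (w.take k) := ⟨w.length, by simpa [List.take_length] using hw⟩
  classical
  set k := Nat.find hex with hk
  have hkle : k ≤ w.length := Nat.find_min' hex (by simpa [List.take_length] using hw)
  refine ⟨w.take k, ⟨Nat.find_spec hex, ?_⟩, List.take_prefix _ _⟩
  by_cases h0 : w.take k = []
  · exact Or.inl h0
  · refine Or.inr ?_
    have hkpos : 0 < k := by
      rcases Nat.eq_zero_or_pos k with h | h
      · exact absurd (by simp [h]) h0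
      · exact h
    have hdrop : (w.take k).dropLast = w.take (k - 1) := by
      rw [List.dropLast_eq_take, List.length_take, List.take_take]
      congr 1
      omega
    have hsub : w.take (k - 1) <+: w.take k := by
      have h : w.take (k-1) = (w.take k).take (k-1) := by
        rw [List.take_take]; congr 1; omega
      rw [h]; exact List.take_prefix _ _
    have hνsub : ν ((w.take k).dropLast) <+: ν (w.take k) := by
      rw [hdrop]; exact hmono _ _ hsub
    have hnot : ¬ x <+: ν (w.take (k - 1)) := Nat.find_min hex (by omega)
    rcases List.prefix_or_prefix_of_prefix hνsub (Nat.find_spec hex) with h | h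
    · constructor
      · rw [hdrop] at h ⊢; exact h
      · rw [hdrop]; intro heq; exact hnot (heq ▸ List.prefix_rfl)
    · rw [hdrop] at h; exact absurd h hnot

/-- Domination inequality for the pushforward under a monotone machine:
the `P`-mass of an antichain mapped by `ν` above `x` is at most `BP(x)`. -/
theorem stmt10 (ν : List Bool → List Bool)
    (hmono : ∀ x y : List Bool, x <+: y → ν x <+: ν y)
    (P : List Bool → ℝ≥0∞)
    (hP : ∀ x, P (x ++ [false]) + P (x ++ [true]) ≤ P x)
    (BP : List Bool → ℝ≥0∞)
    (hBP : ∀ x, BP x = ∑' z : preimg ν x, P z.1)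
    (x : List Bool) (S : Set (List Bool))
    (hanti : ∀ a ∈ S, ∀ b ∈ S, a <+: b → a = b)
    (hS : ∀ w ∈ S, x <+: ν w) :
    ∑' w : S, P w.1 ≤ BP x := by
  classical
  have hch : ∀ w : S, ∃ y, y ∈ preimg ν x ∧ y <+: (w : List Bool) :=
    fun w => exists_preimg_prefix ν hmono x w.1 (hS w.1 w.2)
  let f : S → preimg ν x := fun w => ⟨(hch w).choose, (hch w).choose_spec.1⟩
  have hf : ∀ w : S, ((f w : List Bool)) <+: (w : List Bool) :=
    fun w => (hch w).choose_spec.2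
  have key : ∑' w : S, P w.1 = ∑' z : preimg ν x, ∑' w : f ⁻¹' {z}, P w.1.1 :=
    (ENNReal.tsum_fiberwise (fun w : S => P w.1) f).symm
  rw [key, hBP]
  refine ENNReal.tsum_le_tsum fun z => ?_
  refine kraft_tsum P hP z.1 (fun w : f ⁻¹' {z} => (w : S).1) ?_ ?_ ?_
  · intro a b h
    exact Subtype.ext (Subtype.ext h)
  · intro i
    have : f i.1 = z := i.2
    calc (z : List Bool) <+: (f i.1 : List Bool) := by rw [this]
      _ <+: (i.1 : List Bool) := hf i.1
  · intro i j hij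
    exact hanti i.1.1 i.1.2 j.1.1 j.1.2 hij
end
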